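/- Let λ₀ > 0, μ ∈ (0,1), κ₁, κ₂ > 0, and let {λₙ} be generated by: λ_{n+1} = min{ (μ/2)·(‖wₙ - zₙ‖² + ‖y_{n+1} - zₙ‖²) / (f(wₙ, y_{n+1}) - f(wₙ, zₙ) - f(zₙ, y_{n+1})), λₙ } when the denominator is positive, and λ_{n+1} = λₙ otherwise, where f satisfies the Lipschitz-type condition f(s,z) - f(s,w) - f(w,z) ≤ κ₁‖s-w‖² + κ₂‖w-z‖² for all s,w,z. Then {λₙ} is monotone non-increasing and λₙ ≥ min{λ₀, μ/(2·max{κ₁, κ₂})} for all n. -/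
import Mathlib


theorem stmt_12 {H : Type*} [NormedAddCommGroup H] [InnerProductSpace ℝ H]
    (f : H → H → ℝ) (κ₁ κ₂ : ℝ) (hκ₁ : 0 < κ₁) (hκ₂ : 0 < κ₂)
    (hf : ∀ s w z : H, f s z - f s w - f w z ≤ κ₁ * ‖s - w‖ ^ 2 + κ₂ * ‖w - z‖ ^ 2)
    (w z y : ℕ → H) (lam : ℕ → ℝ) (μ : ℝ) (hμ : μ ∈ Set.Ioo (0 : ℝ) 1)
    (hlam0 : 0 < lam 0)
    (hrec : ∀ n, lam (n + 1) =
      if 0 < f (w n) (y (n + 1)) - f (w n) (z n) - f (z n) (y (n + 1)) then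
        min ((μ / 2) * ((‖w n - z n‖ ^ 2 + ‖y (n + 1) - z n‖ ^ 2)
            / (f (w n) (y (n + 1)) - f (w n) (z n) - f (z n) (y (n + 1))))) (lam n)
      else lam n) :
    (∀ n, lam (n + 1) ≤ lam n) ∧
    (∀ n, min (lam 0) (μ / (2 * max κ₁ κ₂)) ≤ lam n) := by
  obtain ⟨hμ0, hμ1⟩ := hμ
  have hmax : 0 < max κ₁ κ₂ := lt_max_of_lt_left hκ₁
  constructor
  · intro n
    rw [hrec n]
    split
    · exact min_le_right _ _
    · exact le_refl _
  · intro n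
    induction n with
    | zero => exact min_le_left _ _
    | succ n ih =>
      rw [hrec n]
      split
      · rename_i hD
        set D := f (w n) (y (n + 1)) - f (w n) (z n) - f (z n) (y (n + 1)) with hDdef
        set a := ‖w n - z n‖ ^ 2
        set b := ‖y (n + 1) - z n‖ ^ 2
        have hDle : D ≤ κ₁ * a + κ₂ * b := by
          have := hf (w n) (z n) (y (n + 1))
          rwa [norm_sub_rev (z n)] at this
        have ha : 0 ≤ a := sq_nonneg _
        have hb : 0 ≤ b := sq_nonneg _
        have hDle2 : D ≤ max κ₁ κ₂ * (a + b) := by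
          refine hDle.trans ?_
          nlinarith [le_max_left κ₁ κ₂, le_max_right κ₁ κ₂]
        have key : μ / (2 * max κ₁ κ₂) ≤ (μ / 2) * ((a + b) / D) := by
          have h1 : (μ / 2) * ((a + b) / D) = μ * (a + b) / (2 * D) := by
            field_simp
          rw [h1, div_le_div_iff₀ (by positivity) (by positivity)]
          nlinarith
        refine le_min ?_ ih
        exact (min_le_right _ _).trans key
      · exact ih
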